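/- Let P ⊆ [0,1]^n be the n-dimensional cropped cube. Then the point x with all coordinates equal to 1/2 lies in tLC^k(P) whenever k·t + 1 ≤ n; more precisely, every x ∈ {0,1/2,1}^n with |E(x)| ≥ k·t + 1 lies in tLC^k(P). Consequently, the t-dimensional lattice rank of P is at least ⌈n/t⌉. -/

import Mathlib

/-- The `t`-dimensional lattice closure of a set `P ⊆ ℝⁿ`. -/
def tDimLatticeClosure (t n : ℕ) (P : Set (Fin n → ℝ)) : Set (Fin n → ℝ) :=
  ⋂ (π : Fin t → Fin n → ℤ),
    convexHull ℝ (⋂ j : Fin t, {x ∈ P | ∃ m : ℤ, ∑ i, (π j i : ℝ) * x i = (m : ℝ)})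

/-- The `n`-dimensional cropped cube. -/
def croppedCube (n : ℕ) : Set (Fin n → ℝ) :=
  {x | (∀ i, 0 ≤ x i ∧ x i ≤ 1) ∧
    ∀ J : Finset (Fin n), (1 / 2 : ℝ) ≤ ∑ i ∈ J, x i + ∑ i ∈ Jᶜ, (1 - x i)}

/-! For a lattice cut `π : Fin t → ℤⁿ`, the values `π j · y` at a point `y ∈ {0, 1/2, 1}ⁿ` are
integral exactly when the column parities `π · i mod 2 ∈ (ZMod 2)ᵗ` sum to zero over `E(y)`.
Since `(ZMod 2)ᵗ` has dimension `t`, the sum of these parity vectors over `E(x)` is already the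
sum over some `U ⊆ E(x)` with `|U| ≤ t`. Rounding the coordinates in `U` down, resp. up, yields
two grid points with `E = E(x) \ U`, on which every `π j` is integral, and `x` is their midpoint.
By induction on `k`, each grid point with `|E(x)| ≥ k t + 1` survives `k` rounds of closure; for
`k = 0` this is the fact that the cropped cube contains every grid point with a half coordinate. -/

open Finset Submodule Module

theorem exists_subset_card_le_finrank_image_subset_span {K V ι : Type*} [DivisionRing K]
    [AddCommGroup V] [Module K V] [FiniteDimensional K V] (v : ι → V) (E : Finset ι) :
    ∃ T ⊆ E, T.card ≤ finrank K V ∧ v '' E ⊆ span K (v '' T) := by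
  obtain ⟨b, hbE, -, hspan, hli⟩ :=
    exists_linearIndepOn_extension (linearIndepOn_empty K v) (Set.empty_subset (E : Set ι))
  lift b to Finset ι using E.finite_toSet.subset hbE
  refine ⟨b, mod_cast hbE, ?_, hspan⟩
  simpa using hli.fintype_card_le_finrank

theorem ZMod.exists_subset_card_le_finrank_sum_eq {V ι : Type*} [AddCommGroup V]
    [Module (ZMod 2) V] [FiniteDimensional (ZMod 2) V] (v : ι → V) (E : Finset ι) :
    ∃ U ⊆ E, U.card ≤ finrank (ZMod 2) V ∧ ∑ i ∈ U, v i = ∑ i ∈ E, v i := by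
  obtain ⟨T, hTE, hT, hspan⟩ := exists_subset_card_le_finrank_image_subset_span (K := ZMod 2) v E
  have hsum : ∑ i ∈ E, v i ∈ span (ZMod 2) (v '' T) :=
    sum_mem fun i hi => hspan ⟨i, hi, rfl⟩
  obtain ⟨l, hlT, hl⟩ := (Finsupp.mem_span_image_iff_linearCombination _).mp hsum
  have hUT : l.support ⊆ T := fun i hi => by exact_mod_cast hlT hi
  refine ⟨l.support, hUT.trans hTE, (card_le_card hUT).trans hT, ?_⟩
  rw [← hl, Finsupp.linearCombination_apply, Finsupp.sum]
  refine sum_congr rfl fun i hi => ?_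
  have hone : ∀ a : ZMod 2, a ≠ 0 → a = 1 := by decide
  rw [hone _ (Finsupp.mem_support_iff.mp hi), one_smul]

def halfIntegralPoints (n : ℕ) : Set (Fin n → ℝ) :=
  {x | ∀ i, x i = 0 ∨ x i = 1 / 2 ∨ x i = 1}

/-- The paper's `E(x)`. -/
noncomputable def halfCoords {n : ℕ} (x : Fin n → ℝ) : Finset (Fin n) :=
  univ.filter fun i => x i = 1 / 2

section HalfIntegralPoints

variable {n : ℕ} {x : Fin n → ℝ}

theorem mem_croppedCube_of_mem_halfIntegralPoints (hx : x ∈ halfIntegralPoints n)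
    (hE : (halfCoords x).Nonempty) : x ∈ croppedCube n := by
  have hbd : ∀ i, 0 ≤ x i ∧ x i ≤ 1 := fun i => by
    rcases hx i with h | h | h <;> rw [h] <;> norm_num
  refine ⟨hbd, fun J => ?_⟩
  obtain ⟨i₀, hi₀⟩ := hE
  have hxi₀ : x i₀ = 1 / 2 := (mem_filter.mp hi₀).2
  have hin : ∀ i ∈ J, 0 ≤ x i := fun i _ => (hbd i).1
  have hout : ∀ i ∈ Jᶜ, 0 ≤ 1 - x i := fun i _ => sub_nonneg.mpr (hbd i).2
  by_cases hJ : i₀ ∈ J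
  · linarith [single_le_sum hin hJ, sum_nonneg hout]
  · linarith [single_le_sum hout (mem_compl.mpr hJ), sum_nonneg hin]

theorem piecewise_mem_halfIntegralPoints (hx : x ∈ halfIntegralPoints n) (U : Finset (Fin n))
    {b : ℝ} (hb : b = 0 ∨ b = 1) : U.piecewise (fun _ => b) x ∈ halfIntegralPoints n := by
  intro i
  by_cases hi : i ∈ U
  · rw [piecewise_eq_of_mem _ _ _ hi]; tauto
  · rw [piecewise_eq_of_notMem _ _ _ hi]; exact hx i

theorem halfCoords_piecewise (U : Finset (Fin n)) {b : ℝ} (hb : b ≠ 1 / 2) :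
    halfCoords (U.piecewise (fun _ => b) x) = halfCoords x \ U := by
  ext i
  by_cases hi : i ∈ U
  · simpa [halfCoords, hi] using hb
  · simp [halfCoords, hi]

theorem exists_int_sum_mul_eq {y : Fin n → ℝ} (hy : y ∈ halfIntegralPoints n) (c : Fin n → ℤ)
    (hc : ∑ i ∈ halfCoords y, (c i : ZMod 2) = 0) : ∃ m : ℤ, ∑ i, (c i : ℝ) * y i = m := by
  obtain ⟨r, hr⟩ : (2 : ℤ) ∣ ∑ i ∈ halfCoords y, c i :=
    (ZMod.intCast_zmod_eq_zero_iff_dvd _ 2).mp (by push_cast; exact hc)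
  refine ⟨∑ i ∈ univ.filter (y · = 1), c i + r, ?_⟩
  have hr' : ∑ i ∈ halfCoords y, (c i : ℝ) = 2 * r := by exact_mod_cast hr
  calc ∑ i, (c i : ℝ) * y i
      = ∑ i ∈ univ.filter (y · = 1), (c i : ℝ) + (∑ i ∈ halfCoords y, (c i : ℝ)) / 2 := by
        rw [halfCoords, sum_filter, sum_filter, sum_div, ← sum_add_distrib]
        refine sum_congr rfl fun i _ => ?_
        rcases hy i with h | h | h <;> simp [h, div_eq_mul_inv]
    _ = _ := by rw [hr']; push_cast; ring

end HalfIntegralPoints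

theorem mem_tDimLatticeClosure_of_halfIntegralPoints {t n : ℕ} {Q : Set (Fin n → ℝ)}
    {x : Fin n → ℝ} (hx : x ∈ halfIntegralPoints n)
    (hQ : ∀ y ∈ halfIntegralPoints n, (halfCoords x).card ≤ (halfCoords y).card + t → y ∈ Q) :
    x ∈ tDimLatticeClosure t n Q := by
  refine Set.mem_iInter.mpr fun π => ?_
  set S := ⋂ j : Fin t, {y ∈ Q | ∃ m : ℤ, ∑ i, (π j i : ℝ) * y i = m}
  set v : Fin n → Fin t → ZMod 2 := fun i j => ((π j i : ℤ) : ZMod 2)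
  obtain ⟨U, hUE, hUt, hUsum⟩ := ZMod.exists_subset_card_le_finrank_sum_eq v (halfCoords x)
  rw [Module.finrank_fin_fun] at hUt
  have hround : ∀ b : ℝ, (b = 0 ∨ b = 1) → U.piecewise (fun _ => b) x ∈ S := by
    intro b hb
    have hy := piecewise_mem_halfIntegralPoints hx U hb
    have hbh : b ≠ 1 / 2 := by rcases hb with rfl | rfl <;> norm_num
    have hE := halfCoords_piecewise (x := x) U hbh
    refine Set.mem_iInter.mpr fun j => ⟨hQ _ hy ?_, exists_int_sum_mul_eq hy _ ?_⟩
    · rw [hE]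
      have := le_card_sdiff U (halfCoords x)
      omega
    · have hsum : ∑ i ∈ halfCoords x \ U, v i = 0 := by
        rw [sum_sdiff_eq_sub hUE, hUsum, sub_self]
      simpa [hE, v] using congrFun hsum j
  have hmid : x =
      (1 / 2 : ℝ) • U.piecewise (fun _ => 0) x + (1 / 2 : ℝ) • U.piecewise (fun _ => 1) x := by
    funext i
    by_cases hi : i ∈ U
    · simp [hi, (mem_filter.mp (hUE hi)).2]
    · simp [hi]; ring
  rw [hmid]
  exact convex_convexHull ℝ S (subset_convexHull ℝ S (hround 0 (Or.inl rfl)))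
    (subset_convexHull ℝ S (hround 1 (Or.inr rfl))) (by norm_num) (by norm_num) (by norm_num)

theorem mem_iterate_tDimLatticeClosure_croppedCube {t n : ℕ} (k : ℕ) {x : Fin n → ℝ}
    (hx : x ∈ halfIntegralPoints n) (hE : k * t + 1 ≤ (halfCoords x).card) :
    x ∈ (tDimLatticeClosure t n)^[k] (croppedCube n) := by
  induction k generalizing x with
  | zero =>
    exact mem_croppedCube_of_mem_halfIntegralPoints hx (card_pos.mp (by omega))
  | succ k ih =>
    rw [Function.iterate_succ_apply']
    refine mem_tDimLatticeClosure_of_halfIntegralPoints hx fun y hy hyE => ih hy ?_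
    rw [Nat.succ_mul] at hE
    omega

theorem mul_lt_of_lt_toNat_ceil_div {k n t : ℕ} (hk : k < ⌈(n : ℚ) / t⌉.toNat) : k * t < n := by
  have hkq : (k : ℚ) < n / t := Int.lt_ceil.mp (Int.lt_toNat.mp hk)
  rcases Nat.eq_zero_or_pos t with rfl | ht
  · rw [Nat.cast_zero, div_zero] at hkq
    exact absurd hkq (Nat.cast_nonneg k).not_gt
  · exact_mod_cast (lt_div_iff₀ (by exact_mod_cast ht)).mp hkq

theorem stmt_12_general (t n : ℕ) :
    (∀ k : ℕ, ∀ x : Fin n → ℝ, (∀ i, x i = 0 ∨ x i = 1 / 2 ∨ x i = 1) →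
        k * t + 1 ≤ (Finset.univ.filter fun i => x i = 1 / 2).card →
        x ∈ (tDimLatticeClosure t n)^[k] (croppedCube n)) ∧
    (∀ k : ℕ, k < ⌈(n : ℚ) / t⌉.toNat →
        (fun _ : Fin n => (1 / 2 : ℝ)) ∈ (tDimLatticeClosure t n)^[k] (croppedCube n)) := by
  refine ⟨fun k x hx hE => mem_iterate_tDimLatticeClosure_croppedCube k hx hE, fun k hk => ?_⟩
  refine mem_iterate_tDimLatticeClosure_croppedCube k (fun _ => Or.inr (Or.inl rfl)) ?_
  have hall : halfCoords (fun _ : Fin n => (1 / 2 : ℝ)) = univ := filter_true_of_mem fun _ _ => rfl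
  rw [hall, card_univ, Fintype.card_fin]
  exact mul_lt_of_lt_toNat_ceil_div hk

theorem stmt_12 (t n : ℕ) (ht : 1 ≤ t) :
    (∀ k : ℕ, ∀ x : Fin n → ℝ, (∀ i, x i = 0 ∨ x i = 1 / 2 ∨ x i = 1) →
        k * t + 1 ≤ (Finset.univ.filter fun i => x i = 1 / 2).card →
        x ∈ (tDimLatticeClosure t n)^[k] (croppedCube n)) ∧
    (∀ k : ℕ, k < ⌈(n : ℚ) / t⌉.toNat →
        (fun _ : Fin n => (1 / 2 : ℝ)) ∈ (tDimLatticeClosure t n)^[k] (croppedCube n)) :=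
  stmt_12_general t n
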